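/- arXiv:1805.12588 — 2 statements merged into one kernel-verified Lean document; each statement's English description precedes it below -/
import Mathlib

section
/- Let l be an odd prime and K a number field with K ∩ ℚ(ζ_l) = ℚ(ζ_l)^+, so that H = Gal(K(ζ_l)/K) is identified with the order-2 subgroup {σ_1, σ_{−1}} of Δ_l. Then the Stickelberger ideal 𝒥_l annihilates the induced ℤ[Δ_l]-module ℤ[Δ_l] ⊗_{ℤ[H]} Cl(K(ζ_l)) (where Cl(K(ζ_l)) is a ℤ[H]-module via Galois action) if and only if h_{K(ζ_l)} = 1. (Equivalently: such K is C_l-Leopoldt if and only if h_{K(ζ_l)} = 1.) -/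
open scoped NumberField nonZeroDivisors
open NumberField

noncomputable section

/-- The Stickelberger element `θ_l ∈ ℚ[(ℤ/l)ˣ]`. -/
def stickElt (l : ℕ) [NeZero l] : MonoidAlgebra ℚ (ZMod l)ˣ :=
  (l : ℚ)⁻¹ • ∑ a : (ZMod l)ˣ, MonoidAlgebra.single a⁻¹ (((a : ZMod l).val : ℚ))

/-- The canonical map `ℤ[(ℤ/l)ˣ] → ℚ[(ℤ/l)ˣ]`. -/
def zqMap (l : ℕ) : MonoidAlgebra ℤ (ZMod l)ˣ →ₐ[ℤ] MonoidAlgebra ℚ (ZMod l)ˣ :=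
  MonoidAlgebra.lift ℤ _ (ZMod l)ˣ (MonoidAlgebra.of ℚ (ZMod l)ˣ)

/-- The Stickelberger ideal `𝒥_l = ℤ[Δ_l]·θ_l ∩ ℤ[Δ_l]`. -/
def stickIdeal (l : ℕ) [NeZero l] : Set (MonoidAlgebra ℤ (ZMod l)ˣ) :=
  {x | ∃ y : MonoidAlgebra ℤ (ZMod l)ˣ, zqMap l y * stickElt l = zqMap l x}

/-- `act` is the natural action of `Gal(L/K)` on the class group of `L`. -/
def IsClassGroupGalAct (K L : Type*) [Field K] [Field L] [NumberField L] [Algebra K L]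
    (act : (L ≃ₐ[K] L) → ClassGroup (𝓞 L) → ClassGroup (𝓞 L)) : Prop :=
  ∀ (σ : L ≃ₐ[K] L) (I : (Ideal (𝓞 L))⁰)
    (hI : Ideal.map (RingOfIntegers.mapRingEquiv σ : 𝓞 L ≃+* 𝓞 L).toRingHom
        (I : Ideal (𝓞 L)) ∈ (Ideal (𝓞 L))⁰),
    act σ (ClassGroup.mk0 I) = ClassGroup.mk0 ⟨_, hI⟩

/-!
Write `g = σ_{-1}`. A class `c ∈ Cl(L)` gives the element of the induced module supported on
`H = {1, g}` with value `c` at `g` and `J c` at `1`. The element `(2 - σ₂) θ_l = ∑ ⌊2a/l⌋ σ_a⁻¹`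
of `𝒥_l` has coefficient `0` at `σ_1` and `1` at `σ_{-1}`, so the value at `1` of its action on
this element is `c`. Hence if `𝒥_l` annihilates the induced module, every class is trivial; the
converse is immediate.
-/

lemma Ideal.map_ringEquiv_mem_nonZeroDivisors {R S : Type*} [CommRing R] [IsDomain R]
    [CommRing S] [IsDomain S] (e : R ≃+* S) {I : Ideal R} (hI : I ∈ (Ideal R)⁰) :
    I.map (e : R →+* S) ∈ (Ideal S)⁰ := by
  rw [mem_nonZeroDivisors_iff_ne_zero] at hI ⊢
  exact mt (Ideal.map_eq_bot_iff_of_injective e.injective).mp hI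

lemma NumberField.classNumber_eq_one_iff_forall_eq_one (L : Type*) [Field L] [NumberField L] :
    classNumber L = 1 ↔ ∀ c : ClassGroup (𝓞 L), c = 1 :=
  Fintype.card_eq_one_iff.trans
    ⟨fun ⟨_, hd⟩ c => (hd c).trans (hd 1).symm, fun h => ⟨1, h⟩⟩

namespace IsClassGroupGalAct

variable {K L : Type*} [Field K] [Field L] [NumberField L] [Algebra K L]
  {act : (L ≃ₐ[K] L) → ClassGroup (𝓞 L) → ClassGroup (𝓞 L)}

theorem apply_mk0 (hact : IsClassGroupGalAct K L act) (σ : L ≃ₐ[K] L) (I : (Ideal (𝓞 L))⁰) :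
    act σ (ClassGroup.mk0 I) = ClassGroup.mk0
      ⟨_, Ideal.map_ringEquiv_mem_nonZeroDivisors (RingOfIntegers.mapRingEquiv σ) I.2⟩ :=
  hact σ I _

theorem apply_one (hact : IsClassGroupGalAct K L act) (σ : L ≃ₐ[K] L) : act σ 1 = 1 := by
  rw [← map_one ClassGroup.mk0, hact.apply_mk0]
  congr 1
  ext1
  simp only [OneMemClass.coe_one, Ideal.one_eq_top, Ideal.map_top]

theorem mul_apply (hact : IsClassGroupGalAct K L act) (σ τ : L ≃ₐ[K] L) (c : ClassGroup (𝓞 L)) :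
    act (σ * τ) c = act σ (act τ c) := by
  obtain ⟨I, rfl⟩ := ClassGroup.mk0_surjective c
  simp only [hact.apply_mk0]
  congr 2
  rw [Ideal.map_map]
  rfl

theorem one_apply (hact : IsClassGroupGalAct K L act) (c : ClassGroup (𝓞 L)) :
    act 1 c = c := by
  obtain ⟨I, rfl⟩ := ClassGroup.mk0_surjective c
  rw [hact.apply_mk0]
  congr 2
  exact Ideal.map_id _

end IsClassGroupGalAct

section TwistedSingle

variable {G C : Type*} [Group G] [CommGroup C] [DecidableEq G] (g : G) (φ : C → C) (c : C)

def twistedSingle : G → C := fun τ => if τ = g then c else if τ = 1 then φ c else 1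

variable {g φ}

lemma twistedSingle_mul_left (hg₁ : g ≠ 1) (hg : g * g = 1) (hφ₁ : φ 1 = 1)
    (hφφ : ∀ c, φ (φ c) = c) (τ : G) :
    twistedSingle g φ c (g * τ) = φ (twistedSingle g φ c τ) := by
  by_cases hτ₁ : τ = 1
  · simp [twistedSingle, hτ₁, hg₁.symm, hφφ]
  by_cases hτg : τ = g
  · simp [twistedSingle, hτg, hg, hg₁.symm]
  have hgτg : g * τ ≠ g := by simpa using hτ₁
  have hgτ₁ : g * τ ≠ 1 := fun h => hτg <| by
    rw [eq_inv_of_mul_eq_one_right h, inv_eq_of_mul_eq_one_right hg]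
  simp [twistedSingle, hτ₁, hτg, hgτg, hgτ₁, hφ₁]

lemma prod_twistedSingle_zpow [Fintype G] (hg : g ≠ 1) (x : G → ℤ) :
    ∏ a, twistedSingle g φ c a ^ x a = c ^ x g * φ c ^ x 1 := by
  rw [← Finset.prod_mul_prod_compl {g, 1}, Finset.prod_pair hg, Finset.prod_eq_one, mul_one]
  · simp [twistedSingle, hg.symm]
  · intro a ha
    simp_all [twistedSingle]

end TwistedSingle

section Stickelberger

variable {l : ℕ}

lemma zqMap_eq_mapAlgHom : zqMap l = MonoidAlgebra.mapAlgHom _ (Algebra.ofId ℤ ℚ) :=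
  MonoidAlgebra.algHom_ext (fun _ => by simp [zqMap]) (Subsingleton.elim _ _)

variable [NeZero l]

lemma stickElt_coeff (g : (ZMod l)ˣ) :
    (stickElt l).coeff g = (((g⁻¹ : (ZMod l)ˣ) : ZMod l).val : ℚ) / l := by
  simp [stickElt, Finsupp.single_apply, inv_eq_iff_eq_inv, div_eq_inv_mul]

/-- `(2 - σ₂) θ_l`, whose coefficient at `σ_a⁻¹` is `⌊2a / l⌋`. -/
def stickTwo (l : ℕ) [NeZero l] : MonoidAlgebra ℤ (ZMod l)ˣ :=
  .ofCoeff <| Finsupp.equivFunOnFinite.symm fun g =>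
    ((2 * ((g⁻¹ : (ZMod l)ˣ) : ZMod l).val / l : ℕ) : ℤ)

lemma stickTwo_coeff (g : (ZMod l)ˣ) :
    (stickTwo l).coeff g = ((2 * ((g⁻¹ : (ZMod l)ˣ) : ZMod l).val / l : ℕ) : ℤ) := rfl

lemma stickTwo_mem_stickIdeal (hl : Odd l) : stickTwo l ∈ stickIdeal l := by
  set two : (ZMod l)ˣ := ZMod.unitOfCoprime 2 (Nat.coprime_two_left.mpr hl)
  refine ⟨.single 1 2 - .single two 1, ?_⟩
  ext g
  set n := ((g⁻¹ : (ZMod l)ˣ) : ZMod l).val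
  have hval : (((two⁻¹ * g)⁻¹ : (ZMod l)ˣ) : ZMod l).val = 2 * n % l := by
    rw [mul_inv_rev, inv_inv, Units.val_mul, ZMod.val_mul, ZMod.coe_unitOfCoprime,
      ZMod.val_natCast, Nat.mul_mod_mod, mul_comm]
  have hdiv : ((2 * n / l : ℕ) : ℚ) * l + (2 * n % l : ℕ) = 2 * n := by
    exact_mod_cast Nat.div_add_mod' (2 * n) l
  have hl₀ : (l : ℚ) ≠ 0 := by exact_mod_cast NeZero.ne l
  simp only [zqMap_eq_mapAlgHom, map_sub, MonoidAlgebra.mapAlgHom_single, sub_mul,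
    MonoidAlgebra.coeff_sub, Finsupp.sub_apply, map_ofNat, map_one, map_natCast,
    MonoidAlgebra.coeff_single_mul_apply, MonoidAlgebra.coeff_mapAlgHom,
    stickElt_coeff, stickTwo_coeff, hval, inv_one, one_mul]
  field_simp
  linarith

lemma stickTwo_coeff_one (hl : 2 < l) : (stickTwo l).coeff 1 = 0 := by
  rw [stickTwo_coeff, inv_one, Units.val_one, ZMod.val_one_eq_one_mod,
    Nat.mod_eq_of_lt (by omega), Nat.div_eq_of_lt hl, Nat.cast_zero]

lemma stickTwo_coeff_neg_one (hl : 1 < l) : (stickTwo l).coeff (-1) = 1 := by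
  obtain ⟨k, rfl⟩ : ∃ k, l = k + 1 := ⟨l - 1, by omega⟩
  rw [stickTwo_coeff, inv_neg_one, Units.val_neg, Units.val_one, ZMod.val_neg_one,
    Nat.div_eq_of_lt_le (by omega : 1 * (k + 1) ≤ 2 * k) (by omega), Nat.cast_one]

end Stickelberger
/-- `ℤ[Δ_l] ⊗_{ℤ[H]} Cl(L)` is modelled as the functions `f : Δ_l → Cl(L)` with
`f(σ_{-1} τ) = J(f(τ))`, on which `Δ_l` acts by translating the argument. -/
theorem stmt12_general (l : ℕ) [Fact (Nat.Prime l)] [NeZero l] (hl : Odd l)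
    (K L : Type*) [Field K] [Field L] [NumberField L] [Algebra K L]
    (ζ : L) (hζ : IsPrimitiveRoot ζ l)
    (hinj : Function.Injective (hζ.autToPow K))
    (act : (L ≃ₐ[K] L) → ClassGroup (𝓞 L) → ClassGroup (𝓞 L))
    (hact : IsClassGroupGalAct K L act)
    (J : L ≃ₐ[K] L) (hJ : hζ.autToPow K J = -1) :
    (∀ x ∈ stickIdeal l, ∀ f : (ZMod l)ˣ → ClassGroup (𝓞 L),
      (∀ τ : (ZMod l)ˣ, f (-1 * τ) = act J (f τ)) →
      ∀ τ : (ZMod l)ˣ, ∏ a : (ZMod l)ˣ, f (τ * a) ^ (x.coeff a) = 1) ↔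
    classNumber L = 1 := by
  rw [classNumber_eq_one_iff_forall_eq_one]
  refine ⟨fun h c => ?_, fun h _ _ _ _ _ => by simp [h]⟩
  have hl₂ : 2 < l := by
    have := (Fact.out : l.Prime).two_le
    obtain ⟨k, rfl⟩ := hl
    omega
  have hneg : (-1 : (ZMod l)ˣ) ≠ 1 := by
    have : Fact (2 < l) := ⟨hl₂⟩
    simpa [← Units.val_inj] using ZMod.neg_one_ne_one
  have hJJ : J * J = 1 := hinj (by rw [map_mul, hJ, map_one, neg_one_mul, neg_neg])
  have hf := twistedSingle_mul_left c hneg (by rw [neg_one_mul, neg_neg]) (hact.apply_one J)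
    (fun c => by rw [← hact.mul_apply, hJJ, hact.one_apply])
  simpa [prod_twistedSingle_zpow, hneg, stickTwo_coeff_one hl₂,
    stickTwo_coeff_neg_one (by omega : 1 < l)] using h _ (stickTwo_mem_stickIdeal hl) _ hf 1

/-- Let `l` be an odd prime and `K` a number field with
`K ∩ ℚ(ζ_l) = ℚ(ζ_l)⁺`, so that `H = Gal(K(ζ_l)/K)` is identified via `autToPow` with the
order-2 subgroup `{σ_1, σ_{-1}}` of `Δ_l`, generated by the conjugation `J`.  Then the
Stickelberger ideal `𝒥_l` annihilates the induced `ℤ[Δ_l]`-module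
`ℤ[Δ_l] ⊗_{ℤ[H]} Cl(K(ζ_l))` — modelled as the module of functions `f : Δ_l → Cl(K(ζ_l))`
satisfying `f(σ_{-1}·τ) = J(f(τ))`, with `Δ_l` acting by translation of the argument —
if and only if `h_{K(ζ_l)} = 1`. -/
theorem stmt12 (l : ℕ) [Fact (Nat.Prime l)] [NeZero l] (hl : Odd l)
    (K L : Type*) [Field K] [NumberField K] [Field L] [NumberField L] [Algebra K L]
    (ζ : L) (hζ : IsPrimitiveRoot ζ l)
    (hgen : IntermediateField.adjoin K {ζ} = ⊤)
    (hinj : Function.Injective (hζ.autToPow K))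
    (hrange : (hζ.autToPow K).range = Subgroup.zpowers (-1 : (ZMod l)ˣ))
    (act : (L ≃ₐ[K] L) → ClassGroup (𝓞 L) → ClassGroup (𝓞 L))
    (hact : IsClassGroupGalAct K L act)
    (J : L ≃ₐ[K] L) (hJ : hζ.autToPow K J = -1) :
    (∀ x ∈ stickIdeal l, ∀ f : (ZMod l)ˣ → ClassGroup (𝓞 L),
      (∀ τ : (ZMod l)ˣ, f (-1 * τ) = act J (f τ)) →
      ∀ τ : (ZMod l)ˣ, ∏ a : (ZMod l)ˣ, f (τ * a) ^ (x.coeff a) = 1) ↔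
    classNumber L = 1 :=
  stmt12_general l hl K L ζ hζ hinj act hact J hJ

end
end

section
/- Let l ≡ 1 (mod 3) be a prime and H the unique subgroup of order 3 of Δ_l (the cube roots of unity in (ℤ/lℤ)ˣ). Then π_H(𝒥_l) = ℤ[H]. Consequently, if K is a number field such that K ∩ ℚ(ζ_l) is the subfield of ℚ(ζ_l) of degree (l−1)/3 over ℚ (so Gal(K(ζ_l)/K) ≅ H) and π_H(𝒥_l) annihilates Cl(K(ζ_l)), then h_{K(ζ_l)} = 1. -/
/-!
For `0 < n < l` the element `(n - σ_n) θ_l = ∑_b ⌊n b / l⌋ σ_b⁻¹` lies in `𝒥_l`, hence so does the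
difference `d_n` of two consecutive ones: its coefficient at `σ_b⁻¹` is the jump
`⌊(n+1) b / l⌋ - ⌊n b / l⌋ ∈ {0, 1}`, which vanishes at `b = 1` when `n + 1 < l`.
Write `H = {1, σ_u⁻¹, σ_v⁻¹}` with `v < u`. For `0 < n < l - 1` the sequence `⌊n u / l⌋` jumps
`u - 1` times and `⌊n v / l⌋` only `v - 1` times, so at some `n` the first jumps and the second
does not; then `π_H(d_n) = σ_u⁻¹` is a unit of `ℤ[H]`, and as `π_H` is `ℤ[H]`-linear,
`π_H(𝒥_l) = ℤ[H]`. In particular `π_H(x) = 1` for some `x ∈ 𝒥_l`, and for this `x` the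
annihilation hypothesis says `c = 1` for every ideal class `c`.
-/

open scoped NumberField nonZeroDivisors
open NumberField

noncomputable section

/-- The coefficient-projection `π_H : ℤ[Δ_l] → ℤ[H]`. -/
def piH (l : ℕ) [NeZero l] (H : Subgroup (ZMod l)ˣ) (x : MonoidAlgebra ℤ (ZMod l)ˣ) :
    MonoidAlgebra ℤ H :=
  letI : Fintype H := Fintype.ofFinite H
  ∑ h : H, MonoidAlgebra.single h (x.coeff ↑h)


namespace Nat

lemma succ_mul_div_le_mul_div_add_one {l m : ℕ} (hml : m < l) (n : ℕ) :
    (n + 1) * m / l ≤ n * m / l + 1 := by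
  simpa [add_mul, Nat.div_eq_of_lt hml] using Nat.add_div_le_div_add_div_add_one (n * m) m l

lemma sub_one_mul_div_self {l m : ℕ} (hm : 0 < m) (hml : m < l) : (l - 1) * m / l = m - 1 := by
  apply Nat.div_eq_of_lt_le
  · rw [Nat.sub_mul, Nat.sub_mul, one_mul, one_mul, mul_comm]
    omega
  · rw [Nat.sub_mul, one_mul, Nat.sub_add_cancel hm, mul_comm]
    exact Nat.sub_lt (Nat.mul_pos hm (hm.trans hml)) hm

lemma sum_range_succ_mul_div_sub {l m : ℕ} (hm : 0 < m) (hml : m < l) :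
    ∑ i ∈ Finset.range (l - 1), ((i + 1) * m / l - i * m / l) = m - 1 := by
  rw [Finset.sum_range_tsub (fun a b hab => Nat.div_le_div_right (Nat.mul_le_mul_right m hab)),
    sub_one_mul_div_self hm hml, zero_mul, Nat.zero_div, Nat.sub_zero]

lemma exists_succ_mul_div_jump {l u v : ℕ} (hv : 0 < v) (hvu : v < u) (hul : u < l) :
    ∃ n, 0 < n ∧ n + 1 < l ∧ (n + 1) * u / l = n * u / l + 1 ∧ (n + 1) * v / l = n * v / l := by
  by_contra! hno
  have hle : ∀ i ∈ Finset.range (l - 1),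
      (i + 1) * u / l - i * u / l ≤ (i + 1) * v / l - i * v / l := by
    intro i hi
    have hu := succ_mul_div_le_mul_div_add_one hul i
    have hv' := succ_mul_div_le_mul_div_add_one (hvu.trans hul) i
    have hu0 := Nat.div_le_div_right (c := l) (Nat.mul_le_mul_right u (i.le_add_right 1))
    have hv0 := Nat.div_le_div_right (c := l) (Nat.mul_le_mul_right v (i.le_add_right 1))
    rcases Nat.eq_zero_or_pos i with rfl | hi0
    · simp [Nat.div_eq_of_lt hul]
    · have := hno i hi0 (by have := Finset.mem_range.1 hi; omega)
      omega
  have := Finset.sum_le_sum hle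
  rw [sum_range_succ_mul_div_sub (hv.trans hvu) hul,
    sum_range_succ_mul_div_sub hv (hvu.trans hul)] at this
  omega

end Nat

open MonoidAlgebra

def stickelbergerIdeal (l : ℕ) [NeZero l] : Ideal (MonoidAlgebra ℤ (ZMod l)ˣ) where
  carrier := stickIdeal l
  add_mem' := by
    rintro x₁ x₂ ⟨y₁, hy₁⟩ ⟨y₂, hy₂⟩
    exact ⟨y₁ + y₂, by rw [map_add, add_mul, hy₁, hy₂, map_add]⟩
  zero_mem' := ⟨0, by simp⟩
  smul_mem' := by
    rintro c x ⟨y, hy⟩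
    exact ⟨c * y, by rw [smul_eq_mul, map_mul, mul_assoc, hy, map_mul]⟩

lemma zqMap_single (l : ℕ) (a : (ZMod l)ˣ) (k : ℤ) :
    zqMap l (single a k) = single a (k : ℚ) := by
  rw [zqMap, lift_single, of_apply, smul_single, zsmul_eq_mul, mul_one]

lemma single_mul_stickElt (l : ℕ) [NeZero l] (g : (ZMod l)ˣ) (r : ℚ) :
    single g r * stickElt l =
      (l : ℚ)⁻¹ • ∑ a : (ZMod l)ˣ, single a⁻¹ (r * ((g * a : (ZMod l)ˣ) : ZMod l).val) := by
  rw [stickElt, mul_smul_comm, Finset.mul_sum, ← Equiv.sum_comp (Equiv.mulLeft g)]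
  congr 1
  refine Finset.sum_congr rfl fun a _ => ?_
  rw [single_mul_single, Equiv.coe_mulLeft, mul_inv_rev, mul_left_comm, mul_inv_cancel, mul_one]

/-- `(n - σ_n) θ_l`, written with its integral coefficients. -/
def stickMultiple (l n : ℕ) [NeZero l] : MonoidAlgebra ℤ (ZMod l)ˣ :=
  ∑ b : (ZMod l)ˣ, single b⁻¹ ((n * (b : ZMod l).val / l : ℕ) : ℤ)

lemma coeff_stickMultiple (l n : ℕ) [NeZero l] (σ : (ZMod l)ˣ) :
    (stickMultiple l n).coeff σ = (n * ((σ⁻¹ : (ZMod l)ˣ) : ZMod l).val / l : ℕ) := by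
  classical
  simp [stickMultiple, coeff_sum, coeff_single, Finsupp.single_apply, inv_eq_iff_eq_inv]

lemma val_unitOfCoprime_mul {l n : ℕ} [NeZero l] (hn : n.Coprime l) (a : (ZMod l)ˣ) :
    ((ZMod.unitOfCoprime n hn * a : (ZMod l)ˣ) : ZMod l).val = n * (a : ZMod l).val % l := by
  rw [Units.val_mul, ZMod.coe_unitOfCoprime, ZMod.val_mul, ZMod.val_natCast, Nat.mod_mul_mod]

lemma stickMultiple_mem {l n : ℕ} [NeZero l] (hn : n.Coprime l) :
    stickMultiple l n ∈ stickelbergerIdeal l := by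
  refine ⟨single 1 (n : ℤ) - single (ZMod.unitOfCoprime n hn) 1, ?_⟩
  rw [map_sub, zqMap_single, zqMap_single, sub_mul, single_mul_stickElt, single_mul_stickElt,
    ← smul_sub, ← Finset.sum_sub_distrib, stickMultiple, map_sum, Finset.smul_sum]
  refine Finset.sum_congr rfl fun a _ => ?_
  rw [← single_sub, zqMap_single, smul_single, val_unitOfCoprime_mul, one_mul]
  congr 1
  have hl : (l : ℚ) ≠ 0 := Nat.cast_ne_zero.2 (NeZero.ne l)
  have hdiv : (l : ℚ) * (n * (a : ZMod l).val / l : ℕ) + (n * (a : ZMod l).val % l : ℕ) =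
      n * (a : ZMod l).val := by exact_mod_cast Nat.div_add_mod _ l
  rw [smul_eq_mul, Int.cast_one, one_mul, Int.cast_natCast, Int.cast_natCast, ← hdiv]
  field_simp
  ring

section piH

variable {l : ℕ} [NeZero l] {H : Subgroup (ZMod l)ˣ}

lemma coeff_piH (x : MonoidAlgebra ℤ (ZMod l)ˣ) (h : H) : (piH l H x).coeff h = x.coeff h := by
  classical
  simp [piH, coeff_sum, coeff_single, Finsupp.single_apply]

lemma piH_add (x y : MonoidAlgebra ℤ (ZMod l)ˣ) : piH l H (x + y) = piH l H x + piH l H y := by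
  ext h
  simp [coeff_piH]

lemma piH_zsmul (r : ℤ) (x : MonoidAlgebra ℤ (ZMod l)ˣ) : piH l H (r • x) = r • piH l H x := by
  ext h
  rw [coeff_smul_apply, coeff_piH, coeff_piH, coeff_smul_apply]

lemma piH_single_mul (h : H) (x : MonoidAlgebra ℤ (ZMod l)ˣ) :
    piH l H (single (h : (ZMod l)ˣ) 1 * x) = single h 1 * piH l H x := by
  ext k
  simp [coeff_piH]

lemma piH_surjective_of_single_mem (I : Ideal (MonoidAlgebra ℤ (ZMod l)ˣ))
    {x₀ : MonoidAlgebra ℤ (ZMod l)ˣ} (hx₀ : x₀ ∈ I) {s : H} (hs : piH l H x₀ = single s 1)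
    (z : MonoidAlgebra ℤ H) : ∃ x ∈ I, piH l H x = z := by
  induction z using MonoidAlgebra.induction_on with
  | of h =>
    refine ⟨single ((h * s⁻¹ : H) : (ZMod l)ˣ) 1 * x₀, I.mul_mem_left _ hx₀, ?_⟩
    rw [piH_single_mul, hs, single_mul_single, inv_mul_cancel_right, one_mul, of_apply]
  | add z₁ z₂ h₁ h₂ =>
    obtain ⟨x₁, hx₁, rfl⟩ := h₁
    obtain ⟨x₂, hx₂, rfl⟩ := h₂
    exact ⟨x₁ + x₂, I.add_mem hx₁ hx₂, piH_add x₁ x₂⟩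
  | smul r z hz =>
    obtain ⟨x, hx, rfl⟩ := hz
    exact ⟨r • x, Submodule.smul_of_tower_mem I r hx, piH_zsmul r x⟩

end piH

lemma exists_piH_eq_single_of_val_inv_lt {l : ℕ} [Fact l.Prime] [NeZero l]
    {H : Subgroup (ZMod l)ˣ} {σ τ : H} (hσ : σ ≠ 1) (hH : ∀ h : H, h = 1 ∨ h = σ ∨ h = τ)
    (hlt : (((τ : (ZMod l)ˣ)⁻¹ : (ZMod l)ˣ) : ZMod l).val <
      (((σ : (ZMod l)ˣ)⁻¹ : (ZMod l)ˣ) : ZMod l).val) :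
    ∃ x ∈ stickelbergerIdeal l, piH l H x = single σ 1 := by
  have hp : l.Prime := Fact.out
  obtain ⟨n, hn0, hnl, hjump, hstay⟩ :=
    Nat.exists_succ_mul_div_jump (ZMod.val_pos.2 (Units.ne_zero _)) hlt (ZMod.val_lt _)
  have hτσ : τ ≠ σ := by rintro rfl; exact lt_irrefl _ hlt
  refine ⟨stickMultiple l (n + 1) - stickMultiple l n,
    sub_mem (stickMultiple_mem (Nat.coprime_of_lt_prime n.succ_ne_zero hnl hp).symm)
      (stickMultiple_mem (Nat.coprime_of_lt_prime hn0.ne' (by omega) hp).symm), ?_⟩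
  ext h
  rw [coeff_piH, coeff_sub, Finsupp.sub_apply, coeff_stickMultiple, coeff_stickMultiple,
    coeff_single, Finsupp.single_apply]
  rcases hH h with rfl | rfl | rfl
  · have : Fact (1 < l) := ⟨hp.one_lt⟩
    rw [if_neg hσ, OneMemClass.coe_one, inv_one, Units.val_one, ZMod.val_one, mul_one,
      mul_one, Nat.div_eq_of_lt hnl, Nat.div_eq_of_lt (n.lt_succ_self.trans hnl), sub_self]
  · rw [if_pos rfl, hjump, Nat.cast_add, Nat.cast_one, add_sub_cancel_left]
  · rw [if_neg hτσ.symm, hstay, sub_self]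

lemma exists_mem_stickelbergerIdeal_piH_eq_single {l : ℕ} [Fact l.Prime] [NeZero l]
    {H : Subgroup (ZMod l)ˣ} (hH : Nat.card H = 3) :
    ∃ s : H, ∃ x ∈ stickelbergerIdeal l, piH l H x = single s 1 := by
  classical
  let : Fintype H := Fintype.ofFinite H
  have hcard : (Finset.univ.erase (1 : H)).card = 2 := by
    rw [Finset.card_erase_of_mem (Finset.mem_univ _), Finset.card_univ,
      ← Nat.card_eq_fintype_card, hH]
  obtain ⟨a, b, hab, hnontriv⟩ := Finset.card_eq_two.1 hcard
  have hcover : ∀ h : H, h = 1 ∨ h = a ∨ h = b := fun h => by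
    by_cases h1 : h = 1
    · exact Or.inl h1
    · have : h ∈ Finset.univ.erase 1 := Finset.mem_erase.2 ⟨h1, Finset.mem_univ h⟩
      exact Or.inr (by simpa [hnontriv] using this)
  have ha : a ≠ 1 := (Finset.mem_erase.1 (hnontriv ▸ Finset.mem_insert_self a {b})).1
  have hb : b ≠ 1 := (Finset.mem_erase.1 (hnontriv ▸ Finset.mem_insert_of_mem
    (Finset.mem_singleton_self b))).1
  have hval : (((a : (ZMod l)ˣ)⁻¹ : (ZMod l)ˣ) : ZMod l).val ≠
      (((b : (ZMod l)ˣ)⁻¹ : (ZMod l)ˣ) : ZMod l).val := fun h =>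
    hab (Subtype.ext (inv_injective (Units.ext (ZMod.val_injective l h))))
  rcases hval.lt_or_gt with hlt | hlt
  · exact ⟨b, exists_piH_eq_single_of_val_inv_lt hb (fun h => (hcover h).imp_right Or.symm) hlt⟩
  · exact ⟨a, exists_piH_eq_single_of_val_inv_lt ha hcover hlt⟩

lemma piH_stickIdeal_surjective {l : ℕ} [Fact l.Prime] [NeZero l]
    {H : Subgroup (ZMod l)ˣ} (hH : Nat.card H = 3) (z : MonoidAlgebra ℤ H) :
    ∃ x ∈ stickIdeal l, piH l H x = z := by
  obtain ⟨s, x₀, hx₀, hs⟩ := exists_mem_stickelbergerIdeal_piH_eq_single hH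
  exact piH_surjective_of_single_mem _ hx₀ hs z

lemma prod_zpow_coeff_eq_of_piH_eq_one {G M : Type*} [Group G] [Fintype G] [CommGroup M]
    {l : ℕ} [NeZero l] {H : Subgroup (ZMod l)ˣ} {f : G →* (ZMod l)ˣ}
    (hf : Function.Injective f) (hfH : ∀ g, f g ∈ H) {x : MonoidAlgebra ℤ (ZMod l)ˣ}
    (hx : piH l H x = 1) (F : G → M) : ∏ g, F g ^ x.coeff (f g) = F 1 := by
  classical
  have hcoeff (g : G) : x.coeff (f g) = (single (1 : H) (1 : ℤ)).coeff ⟨f g, hfH g⟩ := by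
    rw [← one_def, ← hx, coeff_piH]
  refine (Finset.prod_eq_single 1 (fun g _ hg => ?_) (by simp)).trans ?_
  · have : (⟨f g, hfH g⟩ : H) ≠ 1 := fun h => (map_ne_one_iff f hf).2 hg (congrArg Subtype.val h)
    rw [hcoeff, coeff_single, Finsupp.single_eq_of_ne this, zpow_zero]
  · have h1 : (⟨f 1, hfH 1⟩ : H) = 1 := Subtype.ext (map_one f)
    rw [hcoeff, h1, coeff_single, Finsupp.single_eq_same, zpow_one]

lemma IsClassGroupGalAct.act_one {K L : Type*} [Field K] [Field L] [NumberField L] [Algebra K L]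
    {act : (L ≃ₐ[K] L) → ClassGroup (𝓞 L) → ClassGroup (𝓞 L)}
    (hact : IsClassGroupGalAct K L act) (c : ClassGroup (𝓞 L)) : act 1 c = c := by
  obtain ⟨I, rfl⟩ := ClassGroup.mk0_surjective c
  have hmap : Ideal.map (RingOfIntegers.mapRingEquiv (1 : L ≃ₐ[K] L) : 𝓞 L ≃+* 𝓞 L).toRingHom
      (I : Ideal (𝓞 L)) = I := by
    convert Ideal.map_id (I : Ideal (𝓞 L))
    ext
    rfl
  rw [hact 1 I (by rw [hmap]; exact I.2)]
  exact congrArg ClassGroup.mk0 (Subtype.ext hmap)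

theorem stmt13_general (l : ℕ) [Fact (Nat.Prime l)] [NeZero l]
    (H : Subgroup (ZMod l)ˣ) (hH : Nat.card H = 3) :
    (∀ z : MonoidAlgebra ℤ H, ∃ x ∈ stickIdeal l, piH l H x = z) ∧
    (∀ (K L : Type) [Field K] [NumberField K] [Field L] [NumberField L] [Algebra K L]
      (ζ : L) (hζ : IsPrimitiveRoot ζ l),
      IntermediateField.adjoin K {ζ} = ⊤ →
      Function.Injective (hζ.autToPow K) →
      (hζ.autToPow K).range = H →
      ∀ act : (L ≃ₐ[K] L) → ClassGroup (𝓞 L) → ClassGroup (𝓞 L),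
        IsClassGroupGalAct K L act →
        (∀ x ∈ stickIdeal l, ∀ c : ClassGroup (𝓞 L),
          ∏ σ : L ≃ₐ[K] L, act σ c ^ (x.coeff (hζ.autToPow K σ)) = 1) →
        classNumber L = 1) := by
  refine ⟨piH_stickIdeal_surjective hH, ?_⟩
  intro K L _ _ _ _ _ ζ hζ _ hinj hrange act hact hann
  obtain ⟨x, hx, hx1⟩ := piH_stickIdeal_surjective hH 1
  refine Fintype.card_eq_one_iff.2 ⟨1, fun c => ?_⟩
  have hfH (σ : L ≃ₐ[K] L) : hζ.autToPow K σ ∈ H := hrange ▸ ⟨σ, rfl⟩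
  rw [← hann x hx c, prod_zpow_coeff_eq_of_piH_eq_one hinj hfH hx1, hact.act_one]

/-- Let `l ≡ 1 (mod 3)` be a prime and `H` the unique subgroup of order 3
of `Δ_l`.  Then `π_H(𝒥_l) = ℤ[H]`.  Consequently, if `K` is a number field such that
`K ∩ ℚ(ζ_l)` is the subfield of `ℚ(ζ_l)` of degree `(l-1)/3` over `ℚ`
(so `Gal(K(ζ_l)/K) ≅ H` via `autToPow`) and `π_H(𝒥_l)` annihilates `Cl(K(ζ_l))`,
then `h_{K(ζ_l)} = 1`. -/
theorem stmt13 (l : ℕ) [Fact (Nat.Prime l)] [NeZero l] (hl : l % 3 = 1)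
    (H : Subgroup (ZMod l)ˣ) (hH : Nat.card H = 3) :
    (∀ z : MonoidAlgebra ℤ H, ∃ x ∈ stickIdeal l, piH l H x = z) ∧
    (∀ (K L : Type) [Field K] [NumberField K] [Field L] [NumberField L] [Algebra K L]
      (ζ : L) (hζ : IsPrimitiveRoot ζ l),
      IntermediateField.adjoin K {ζ} = ⊤ →
      Function.Injective (hζ.autToPow K) →
      (hζ.autToPow K).range = H →
      ∀ act : (L ≃ₐ[K] L) → ClassGroup (𝓞 L) → ClassGroup (𝓞 L),
        IsClassGroupGalAct K L act →
        (∀ x ∈ stickIdeal l, ∀ c : ClassGroup (𝓞 L),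
          ∏ σ : L ≃ₐ[K] L, act σ c ^ (x.coeff (hζ.autToPow K σ)) = 1) →
        classNumber L = 1) :=
  stmt13_general l H hH

end
end
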